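/- arXiv:1610.04944 — 2 statements merged into one kernel-verified Lean document; each statement's English description precedes it below -/
import Mathlib

section
/- Let (W,S) be a Coxeter system with length function ℓ and u, v ∈ W. Then uv equals the maximum u ∘ v of {u'v' : u' ≤ u, v' ≤ v} in Bruhat order if and only if ℓ(uv) = ℓ(u) + ℓ(v). -/
/-- The Bruhat order on a Coxeter group. -/
def bruhatLE {B W : Type*} [Group W] {M : CoxeterMatrix B} (cs : CoxeterSystem M W)
    (u v : W) : Prop :=
  ∃ ω : List B, cs.IsReduced ω ∧ cs.wordProd ω = v ∧
    ∃ ω' : List B, ω'.Sublist ω ∧ cs.IsReduced ω' ∧ cs.wordProd ω' = u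

/-!
Let `a`, `b` be reduced words for `u`, `v`, and run through `b` keeping a letter exactly when it
lengthens the word built so far after `a`. This gives a subword `c` of `b` with `a ++ c` reduced,
and, by the lifting property of the Bruhat order, `u * v` is the product of a reduced subword of
`a ++ c`. If `u * v` is the maximum, then `u * π c ≤ u * v` while `ℓ (u * v) ≤ ℓ (u * π c)`,
so `u * v = u * π c`, `π c = v` and `ℓ (u * v) = ℓ u + ℓ c = ℓ u + ℓ v`.

The lifting property comes from Deodhar's property Z for descending chains of reflections, and
the comparison of chains with subwords rests on the strong exchange condition, which is proved
with the action of `W` on `W × ZMod 2` that records, for each reflection `t`, the parity of the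
number of occurrences of `t` in a right inversion sequence.
-/

open List

theorem List.sublist_append_singleton_iff {α : Type*} {l l' : List α} {a : α} :
    l <+ l' ++ [a] ↔ l <+ l' ∨ ∃ l₀, l = l₀ ++ [a] ∧ l₀ <+ l' := by
  constructor
  · intro h
    obtain ⟨l₁, l₂, rfl, h₁, h₂⟩ := sublist_append_iff.1 h
    rcases sublist_singleton.1 h₂ with rfl | rfl
    · simpa using Or.inl h₁
    · exact Or.inr ⟨l₁, rfl, h₁⟩
  · rintro (h | ⟨l₀, rfl, h⟩)
    · exact h.trans (sublist_append_left _ _)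
    · exact h.append_right _

namespace CoxeterSystem

variable {B W : Type*} [Group W] {M : CoxeterMatrix B} (cs : CoxeterSystem M W)

local prefix:100 "s" => cs.simple
local prefix:100 "π" => cs.wordProd
local prefix:100 "ℓ" => cs.length
local prefix:100 "ris" => cs.rightInvSeq
local prefix:100 "lis" => cs.leftInvSeq

theorem rightInvSeq_append (α β : List B) :
    ris (α ++ β) = (ris α).map (MulAut.conj (π β)⁻¹) ++ ris β := by
  induction α with
  | nil => simp
  | cons i α ih =>
    simp only [cons_append, rightInvSeq, ih, map_cons, wordProd_append, MulAut.conj_apply,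
      mul_inv_rev, inv_inv]
    congr 1
    group

theorem reverse_alternatingWord_two_mul (i i' : B) (p : ℕ) :
    (alternatingWord i i' (2 * p)).reverse = alternatingWord i' i (2 * p) := by
  induction p with
  | zero => rfl
  | succ p ih =>
    rw [show 2 * (p + 1) = 2 * p + 1 + 1 by ring, alternatingWord_succ, alternatingWord_succ,
      alternatingWord_succ', alternatingWord_succ']
    simp [ih]

theorem prod_map_alternatingWord_two_mul {G : Type*} [Monoid G] (f : B → G) (i i' : B) (p : ℕ) :
    ((alternatingWord i i' (2 * p)).map f).prod = (f i * f i') ^ p := by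
  induction p with
  | zero => simp [alternatingWord]
  | succ p ih =>
    rw [show 2 * (p + 1) = 2 * p + 1 + 1 by ring, alternatingWord_succ', alternatingWord_succ']
    simp [ih, pow_succ', mul_assoc]

open Classical in
theorem count_rightInvSeq_alternatingWord_even (i i' : B) (t : W) :
    Even ((ris (alternatingWord i i' (2 * M i i'))).count t) := by
  set p := M i i'
  set l := lis (alternatingWord i' i (2 * p))
  have hl : l.length = 2 * p := by simp [l]
  have hperiod : l.drop p = l.take p := by
    refine ext_getElem (by simp [hl]; omega) fun k h₁ h₂ => ?_
    simp only [getElem_drop, getElem_take]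
    have hk : k < p := by simp [hl] at h₂; omega
    rw [getElem_leftInvSeq_alternatingWord cs i' i p (p + k) (by omega),
      getElem_leftInvSeq_alternatingWord cs i' i p k (by omega),
      prod_alternatingWord_eq_mul_pow, prod_alternatingWord_eq_mul_pow]
    rw [show (2 * (p + k) + 1) / 2 = p + k by omega, show (2 * k + 1) / 2 = k by omega, pow_add,
      simple_mul_simple_pow, one_mul]
    simp
  rw [← reverse_alternatingWord_two_mul, rightInvSeq_reverse, count_reverse]
  change Even (l.count t)
  rw [← take_append_drop p l, count_append, hperiod]
  exact ⟨_, rfl⟩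

open Classical in
/-- Björner–Brenti's action of `s i` on pairs (reflection, sign). As it factors through `W`,
the parity of the number of occurrences of `t` in `ris ω` depends only on `π ω`. -/
noncomputable def reflSignPerm (i : B) : Equiv.Perm (W × ZMod 2) :=
  Function.Involutive.toPerm (fun p => (s i * p.1 * s i, p.2 + if p.1 = s i then 1 else 0)) <| by
    rintro ⟨t, ε⟩
    by_cases h : t = s i
    · simp [h, add_assoc, CharTwo.add_self_eq_zero]
    · simp [h, mul_assoc, mul_eq_one_iff_eq_inv]

open Classical in
theorem reflSignPerm_apply (i : B) (t : W) (ε : ZMod 2) :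
    cs.reflSignPerm i (t, ε) = (s i * t * s i, ε + if t = s i then 1 else 0) := rfl

open Classical in
theorem prod_map_reflSignPerm_apply (ω : List B) (t : W) (ε : ZMod 2) :
    (ω.map cs.reflSignPerm).prod (t, ε) =
      (π ω * t * (π ω)⁻¹, ε + (ris ω).count t) := by
  induction ω generalizing ε with
  | nil => simp
  | cons i ω ih =>
    have hiff : π ω * t * (π ω)⁻¹ = s i ↔ (π ω)⁻¹ * s i * π ω = t := by
      constructor <;> intro h <;> rw [← h] <;> group
    rw [map_cons, prod_cons, Equiv.Perm.mul_apply, ih, reflSignPerm_apply, rightInvSeq, count_cons]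
    simp only [wordProd_cons, mul_inv_rev, inv_simple, beq_iff_eq, hiff, Prod.mk.injEq]
    constructor
    · group
    · push_cast; ring

theorem isLiftable_reflSignPerm : M.IsLiftable cs.reflSignPerm := by
  intro i i'
  rw [← prod_map_alternatingWord_two_mul]
  ext ⟨t, ε⟩ : 1
  have heven := ZMod.natCast_eq_zero_iff_even.2 (cs.count_rightInvSeq_alternatingWord_even i i' t)
  have hprod : π (alternatingWord i i' (2 * M i i')) = 1 := by
    rw [prod_alternatingWord_eq_mul_pow]
    simp
  rw [prod_map_reflSignPerm_apply, hprod, heven]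
  simp

noncomputable def reflSignHom : W →* Equiv.Perm (W × ZMod 2) :=
  cs.lift ⟨cs.reflSignPerm, cs.isLiftable_reflSignPerm⟩

theorem reflSignHom_simple (i : B) : cs.reflSignHom (s i) = cs.reflSignPerm i :=
  cs.lift_apply_simple cs.isLiftable_reflSignPerm i

theorem reflSignHom_wordProd (ω : List B) :
    cs.reflSignHom (π ω) = (ω.map cs.reflSignPerm).prod := by
  rw [wordProd, map_list_prod, map_map]
  congr 2
  exact funext cs.reflSignHom_simple

open Classical in
theorem count_rightInvSeq_congr {ω ω' : List B} (h : π ω = π ω') (t : W) :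
    ((ris ω).count t : ZMod 2) = (ris ω').count t := by
  have := congr_arg (fun w => (cs.reflSignHom w (t, 0)).2) h
  simpa [reflSignHom_wordProd, prod_map_reflSignPerm_apply] using this

theorem reflSignHom_apply (w t : W) (ε : ZMod 2) :
    cs.reflSignHom w (t, ε) = (w * t * w⁻¹, ε + (cs.reflSignHom w (t, 0)).2) := by
  obtain ⟨ω, rfl⟩ := cs.wordProd_surjective w
  simp [reflSignHom_wordProd, prod_map_reflSignPerm_apply]

open Classical in
theorem count_rightInvSeq_of_isReflection {ω : List B} {t : W} (ht : cs.IsReflection t)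
    (hω : π ω = t) : ((ris ω).count t : ZMod 2) = 1 := by
  obtain ⟨x, p, rfl⟩ := ht
  -- The sign changes contributed by `x⁻¹` and `x` cancel (`h₃`), leaving that of `s p` on itself.
  set φ := cs.reflSignHom
  set c := (φ x⁻¹ (x * s p * x⁻¹, 0)).2
  have h₁ : φ x⁻¹ (x * s p * x⁻¹, 0) = (s p, c) := by
    rw [reflSignHom_apply, inv_inv, zero_add, Prod.mk.injEq]
    exact ⟨by group, rfl⟩
  have h₂ : φ (s p) (s p, c) = (s p, c + 1) := by
    simp [φ, reflSignHom_simple, reflSignPerm_apply]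
  have h₃ : φ x (s p, c) = (x * s p * x⁻¹, 0) := by
    rw [← h₁, ← Equiv.Perm.mul_apply, ← map_mul, mul_inv_cancel, map_one, Equiv.Perm.one_apply]
  have hconj : φ (x * s p * x⁻¹) (x * s p * x⁻¹, 0) = (x * s p * x⁻¹, 1) := by
    rw [reflSignHom_apply] at h₃
    rw [map_mul, map_mul, map_inv, Equiv.Perm.mul_apply, Equiv.Perm.mul_apply,
      ← map_inv, h₁, h₂, reflSignHom_apply]
    simp only [Prod.mk.injEq] at h₃ ⊢
    refine ⟨h₃.1, ?_⟩
    linear_combination h₃.2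
  rw [← hω, reflSignHom_wordProd, prod_map_reflSignPerm_apply, hω] at hconj
  simpa using (Prod.mk.inj hconj).2

open Classical in
theorem mem_rightInvSeq_of_isRightInversion {ω : List B} {t : W}
    (ht : cs.IsRightInversion (π ω) t) : t ∈ ris ω := by
  obtain ⟨ω', hω', hω'_eq⟩ := cs.exists_isReduced (π ω * t)
  obtain ⟨τ, hτ⟩ := cs.wordProd_surjective t
  -- Otherwise `t` occurs an odd number of times in `ris (ω ++ τ)`, hence in the reduced word
  -- `ω'` of `π ω * t`, and would shorten `π ω * t`.
  by_contra hnot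
  have hodd : ((ris ω').count t : ZMod 2) = 1 := by
    have hconj : MulAut.conj (π τ)⁻¹ t = t := by simp [hτ]
    rw [← cs.count_rightInvSeq_congr (ω := ω ++ τ) (by rw [wordProd_append, hτ, hω'_eq]),
      rightInvSeq_append, count_append, ← hconj, count_map_of_injective _ _ (MulAut.conj _).injective, hconj,
      count_eq_zero_of_not_mem hnot, zero_add, cs.count_rightInvSeq_of_isReflection ht.1 hτ]
  have hmem : t ∈ ris ω' := by
    by_contra h
    simp [count_eq_zero_of_not_mem h] at hodd
  have hlt := (cs.isRightInversion_of_mem_rightInvSeq hω' hmem).2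
  rw [← hω'_eq, mul_assoc, ht.1.mul_self, mul_one] at hlt
  exact ht.2.not_gt hlt

theorem exists_wordProd_eraseIdx_eq_mul {ω : List B} {t : W}
    (ht : cs.IsRightInversion (π ω) t) : ∃ j < ω.length, π (ω.eraseIdx j) = π ω * t := by
  obtain ⟨j, hj, hjt⟩ := mem_iff_getElem.mp (cs.mem_rightInvSeq_of_isRightInversion ht)
  refine ⟨j, by simpa using hj, ?_⟩
  rw [← wordProd_mul_getD_rightInvSeq, getD_eq_getElem _ _ hj, hjt]

theorem isReduced_append_singleton_iff {ω : List B} {i : B} :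
    cs.IsReduced (ω ++ [i]) ↔ cs.IsReduced ω ∧ ¬cs.IsRightDescent (π ω) i := by
  have h₁ := cs.length_wordProd_le ω
  have h₂ : ℓ (π ω * s i) ≤ ℓ (π ω) + 1 := (cs.length_mul_le _ _).trans (by simp [length_simple])
  rw [not_isRightDescent_iff, IsReduced, IsReduced, wordProd_append, wordProd_singleton,
    length_append, length_singleton]
  omega

variable {cs} in
theorem IsReduced.exists_eraseIdx_of_isRightDescent {ω : List B} {i : B} (hω : cs.IsReduced ω)
    (hi : cs.IsRightDescent (π ω) i) :
    ∃ j < ω.length, cs.IsReduced (ω.eraseIdx j) ∧ π (ω.eraseIdx j) = π ω * s i := by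
  obtain ⟨j, hj, hprod⟩ := cs.exists_wordProd_eraseIdx_eq_mul
    ((cs.isRightInversion_simple_iff_isRightDescent _ i).2 hi)
  refine ⟨j, hj, ?_, hprod⟩
  have := (cs.isRightDescent_iff).1 hi
  rw [IsReduced, hprod, length_eraseIdx_of_lt hj, ← hω.eq]
  omega

theorem exists_sublist_isReduced_wordProd_eq (ω : List B) :
    ∃ e, e <+ ω ∧ cs.IsReduced e ∧ π e = π ω := by
  induction ω using reverseRecOn with
  | nil => exact ⟨[], Sublist.refl _, by simp [IsReduced], rfl⟩
  | append_singleton ω i ih =>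
    obtain ⟨e, he, hre, hprod⟩ := ih
    rw [wordProd_append, wordProd_singleton, ← hprod]
    by_cases hi : cs.IsRightDescent (π e) i
    · obtain ⟨j, -, hrej, hprodj⟩ := hre.exists_eraseIdx_of_isRightDescent hi
      exact ⟨e.eraseIdx j, ((eraseIdx_sublist e j).trans he).trans (sublist_append_left _ _),
        hrej, hprodj⟩
    · exact ⟨e ++ [i], he.append_right _, cs.isReduced_append_singleton_iff.2 ⟨hre, hi⟩,
        by rw [wordProd_append, wordProd_singleton]⟩

/-- The Bruhat order by descending chains of reflections; `bruhatLE` is its subword form. -/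
inductive BruhatChain (cs : CoxeterSystem M W) : W → W → Prop
  | refl (w : W) : BruhatChain cs w w
  | step {u w : W} (t : W) : cs.IsRightInversion w t → BruhatChain cs u (w * t) →
      BruhatChain cs u w

variable {cs}

theorem BruhatChain.exists_sublist {u w : W} (h : BruhatChain cs u w) {ω : List B}
    (hω : π ω = w) : ∃ e, e <+ ω ∧ cs.IsReduced e ∧ π e = u := by
  induction h generalizing ω with
  | refl =>
    obtain ⟨e, he, hre, hprod⟩ := cs.exists_sublist_isReduced_wordProd_eq ω
    exact ⟨e, he, hre, hprod.trans hω⟩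
  | step t ht _ ih =>
    obtain ⟨j, -, hj⟩ := cs.exists_wordProd_eraseIdx_eq_mul (hω ▸ ht)
    obtain ⟨e, he, hre, hprod⟩ := ih (hj.trans (by rw [hω]))
    exact ⟨e, he.trans (eraseIdx_sublist ω j), hre, hprod⟩

theorem BruhatChain.mul_simple_of_not_isRightDescent {x w : W} {i : B} (h : BruhatChain cs x w)
    (hw : ¬cs.IsRightDescent w i) : BruhatChain cs x (w * s i) := by
  refine .step (s i) ((cs.isRightInversion_simple_iff_isRightDescent _ i).2 ?_) ?_
  · rwa [isRightDescent_iff_not_isRightDescent_mul, simple_mul_simple_cancel_right]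
  · rwa [simple_mul_simple_cancel_right]

/-- `hZ` is property Z (`BruhatChain.mul_simple_mul_simple`) below length `n`, so that the two
can be proved by a joint induction. -/
theorem bruhatChain_of_sublist_of_lt {n : ℕ}
    (hZ : ∀ (x y : W) (i : B), ℓ y < n → BruhatChain cs x y → ¬cs.IsRightDescent x i →
      ¬cs.IsRightDescent y i → BruhatChain cs (x * s i) (y * s i))
    {ω e : List B} (hω : cs.IsReduced ω) (hn : ω.length ≤ n) (he : e <+ ω)
    (hre : cs.IsReduced e) : BruhatChain cs (π e) (π ω) := by
  induction ω using reverseRecOn generalizing e with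
  | nil =>
    rw [sublist_nil.1 he]
    exact .refl _
  | append_singleton ω i ih =>
    obtain ⟨hω₀, hωi⟩ := cs.isReduced_append_singleton_iff.1 hω
    rw [length_append, length_singleton] at hn
    rcases List.sublist_append_singleton_iff.1 he with he₀ | ⟨e₀, rfl, he₀⟩
    · rw [wordProd_append, wordProd_singleton]
      exact (ih hω₀ (by omega) he₀ hre).mul_simple_of_not_isRightDescent hωi
    · obtain ⟨hre₀, hei⟩ := cs.isReduced_append_singleton_iff.1 hre
      simp only [wordProd_append, wordProd_singleton]
      exact hZ _ _ i (by rw [hω₀.eq]; omega) (ih hω₀ (by omega) he₀ hre₀) hei hωi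

theorem BruhatChain.mul_simple_of_isRightDescent {x w : W} {i : B}
    (hZ : ∀ (x y : W) (i : B), ℓ y < ℓ w → BruhatChain cs x y → ¬cs.IsRightDescent x i →
      ¬cs.IsRightDescent y i → BruhatChain cs (x * s i) (y * s i))
    (h : BruhatChain cs x w) (hw : cs.IsRightDescent w i) (hx : ¬cs.IsRightDescent x i) :
    BruhatChain cs x (w * s i) := by
  obtain ⟨g, hg, hgw⟩ := cs.exists_isReduced (w * s i)
  have hgi : π (g ++ [i]) = w := by
    rw [wordProd_append, wordProd_singleton, ← hgw, simple_mul_simple_cancel_right]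
  have hrgi : cs.IsReduced (g ++ [i]) := by
    refine cs.isReduced_append_singleton_iff.2 ⟨hg, ?_⟩
    rwa [← hgw, ← isRightDescent_iff_not_isRightDescent_mul]
  obtain ⟨f, hf, hrf, rfl⟩ := h.exists_sublist hgi
  rcases List.sublist_append_singleton_iff.1 hf with hf | ⟨f, rfl, hf⟩
  · rw [hgw]
    refine bruhatChain_of_sublist_of_lt (fun x y i hy => hZ x y i ?_) hg le_rfl hf hrf
    have := cs.isRightDescent_iff.1 hw
    rw [← hg.eq, ← hgw] at hy
    omega
  · exfalso
    refine hx ?_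
    rw [wordProd_append, wordProd_singleton, isRightDescent_iff_not_isRightDescent_mul,
      simple_mul_simple_cancel_right]
    exact (cs.isReduced_append_singleton_iff.1 hrf).2

theorem BruhatChain.mul_simple_mul_simple {x y : W} {i : B} (h : BruhatChain cs x y)
    (hx : ¬cs.IsRightDescent x i) (hy : ¬cs.IsRightDescent y i) :
    BruhatChain cs (x * s i) (y * s i) := by
  obtain ⟨n, hn⟩ : ∃ n, ℓ y = n := ⟨_, rfl⟩
  induction n using Nat.strong_induction_on generalizing x y i with
  | _ n ih =>
  cases h with
  | refl => exact .refl _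
  | step t ht h =>
    have hlt : ℓ (y * t) < n := hn ▸ ht.2
    by_cases hyt : cs.IsRightDescent (y * t) i
    · have hxyts : BruhatChain cs x (y * t * s i) := h.mul_simple_of_isRightDescent
        (fun x' y' j hy' hc hx' hy'' => ih _ (hy'.trans hlt) hc hx' hy'' rfl) hyt hx
      have hlt' : ℓ (y * t * s i) < n := by have := cs.isRightDescent_iff.1 hyt; omega
      have hxsyt := ih _ hlt' hxyts hx (cs.isRightDescent_iff_not_isRightDescent_mul.1 hyt) rfl
      rw [simple_mul_simple_cancel_right] at hxsyt
      exact (BruhatChain.step t ht hxsyt).mul_simple_of_not_isRightDescent hy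
    · have hr : cs.IsRightInversion (y * s i) ((s i)⁻¹ * t * s i) := by
        refine ⟨by simpa using ht.1.conj (s i)⁻¹, ?_⟩
        rw [show y * s i * ((s i)⁻¹ * t * s i) = y * t * s i by group]
        have := ht.2
        rw [not_isRightDescent_iff] at hy hyt
        omega
      refine .step _ hr ?_
      rw [show y * s i * ((s i)⁻¹ * t * s i) = y * t * s i by group]
      exact ih _ hlt h hx hyt rfl

theorem exists_sublist_wordProd_eq_mul_simple {ω e : List B} {i : B} (hω : cs.IsReduced ω)
    (hωi : cs.IsRightDescent (π ω) i) (he : e <+ ω) (hre : cs.IsReduced e)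
    (hei : ¬cs.IsRightDescent (π e) i) : ∃ e', e' <+ ω ∧ cs.IsReduced e' ∧ π e' = π e * s i := by
  have hZ (n : ℕ) (x y : W) (j : B) (_ : ℓ y < n) (h : BruhatChain cs x y)
      (hx : ¬cs.IsRightDescent x j) (hy : ¬cs.IsRightDescent y j) :=
    h.mul_simple_mul_simple hx hy
  have h := (bruhatChain_of_sublist_of_lt (hZ _) hω le_rfl he hre).mul_simple_of_isRightDescent
    (hZ _) hωi hei
  have h' := h.mul_simple_mul_simple hei (cs.isRightDescent_iff_not_isRightDescent_mul.1 hωi)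
  rw [simple_mul_simple_cancel_right] at h'
  exact h'.exists_sublist rfl

variable (cs) in
/-- `c` is the greedy subword of `b`: a letter is kept exactly when it lengthens `a ++ c`. -/
theorem exists_demazure_sublist {a : List B} (ha : cs.IsReduced a) (b : List B) :
    ∃ c, c <+ b ∧ cs.IsReduced (a ++ c) ∧
      ∃ e, e <+ a ++ c ∧ cs.IsReduced e ∧ π e = π a * π b := by
  induction b using reverseRecOn with
  | nil => exact ⟨[], Sublist.refl _, by simpa using ha, a, by simp, ha, by simp⟩
  | append_singleton b i ih =>
    obtain ⟨c, hc, hac, e, he, hre, hprod⟩ := ih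
    have hprod' : π a * π (b ++ [i]) = π e * s i := by
      rw [wordProd_append, wordProd_singleton, hprod, mul_assoc]
    have hac' : cs.IsRightDescent (π (a ++ c)) i ∨ cs.IsReduced (a ++ (c ++ [i])) := by
      rw [← append_assoc, isReduced_append_singleton_iff]
      tauto
    by_cases hei : cs.IsRightDescent (π e) i
    · obtain ⟨j, -, hrej, hprodj⟩ := hre.exists_eraseIdx_of_isRightDescent hei
      have hej : e.eraseIdx j <+ a ++ c := (eraseIdx_sublist e j).trans he
      rcases hac' with hi | hac'
      · exact ⟨c, hc.trans (sublist_append_left _ _), hac, _, hej, hrej, hprodj.trans hprod'.symm⟩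
      · refine ⟨c ++ [i], hc.append_right _, hac', _, ?_, hrej, hprodj.trans hprod'.symm⟩
        rw [← append_assoc]
        exact hej.trans (sublist_append_left _ _)
    · rcases hac' with hi | hac'
      · obtain ⟨e', he', hre', hprod''⟩ :=
          exists_sublist_wordProd_eq_mul_simple hac hi he hre hei
        exact ⟨c, hc.trans (sublist_append_left _ _), hac, e', he', hre', hprod''.trans hprod'.symm⟩
      · refine ⟨c ++ [i], hc.append_right _, hac', e ++ [i], ?_,
          cs.isReduced_append_singleton_iff.2 ⟨hre, hei⟩, ?_⟩
        · rw [← append_assoc]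
          exact he.append_right _
        · rw [wordProd_append, wordProd_singleton, hprod']

end CoxeterSystem

section bruhatLE

variable {B W : Type*} [Group W] {M : CoxeterMatrix B} {cs : CoxeterSystem M W} {x y : W}

variable (cs) in
theorem bruhatLE_refl (w : W) : bruhatLE cs w w := by
  obtain ⟨ω, hω, rfl⟩ := cs.exists_isReduced w
  exact ⟨ω, hω, rfl, ω, Sublist.refl ω, hω, rfl⟩

theorem bruhatLE.length_le (h : bruhatLE cs x y) : cs.length x ≤ cs.length y := by
  obtain ⟨ω, hω, rfl, e, he, hre, rfl⟩ := h
  rw [hω.eq, hre.eq]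
  exact he.length_le

theorem bruhatLE.eq_of_length_le (h : bruhatLE cs x y) (hl : cs.length y ≤ cs.length x) :
    x = y := by
  obtain ⟨ω, hω, rfl, e, he, hre, rfl⟩ := h
  rw [hω.eq, hre.eq] at hl
  rw [he.eq_of_length_le hl]

end bruhatLE

/-- `uv = u ∘ v` (the Bruhat-maximum of `{u'v' : u' ≤ u, v' ≤ v}`) iff
`ℓ(uv) = ℓ(u) + ℓ(v)`. -/
theorem stmt2 {B W : Type*} [Group W] {M : CoxeterMatrix B} (cs : CoxeterSystem M W)
    (u v m : W)
    (hmem : ∃ u' v' : W, bruhatLE cs u' u ∧ bruhatLE cs v' v ∧ m = u' * v')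
    (hmax : ∀ x : W, (∃ u' v' : W, bruhatLE cs u' u ∧ bruhatLE cs v' v ∧ x = u' * v') →
      bruhatLE cs x m) :
    u * v = m ↔ cs.length (u * v) = cs.length u + cs.length v := by
  constructor
  · rintro rfl
    obtain ⟨a, ha, rfl⟩ := cs.exists_isReduced u
    obtain ⟨b, hb, rfl⟩ := cs.exists_isReduced v
    obtain ⟨c, hc, hac, e, he, hre, hprod⟩ := cs.exists_demazure_sublist ha b
    have hrc : cs.IsReduced c := by simpa using hac.drop a.length
    have hle := hmax _ ⟨_, _, bruhatLE_refl cs _, ⟨b, hb, rfl, c, hc, hrc, rfl⟩,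
      cs.wordProd_append a c⟩
    have heq := hle.eq_of_length_le (by rw [← hprod, hre.eq, hac.eq]; exact he.length_le)
    have hcb : cs.wordProd c = cs.wordProd b :=
      mul_left_cancel (by rw [← cs.wordProd_append, heq])
    rw [← heq, hac.eq, length_append, ha.eq, ← hcb, hrc.eq]
  · intro hadd
    obtain ⟨u', v', hu', hv', rfl⟩ := hmem
    refine (hmax _ ⟨u, v, bruhatLE_refl cs u, bruhatLE_refl cs v, rfl⟩).eq_of_length_le ?_
    calc cs.length (u' * v') ≤ cs.length u' + cs.length v' := cs.length_mul_le u' v'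
      _ ≤ cs.length u + cs.length v := add_le_add hu'.length_le hv'.length_le
      _ = cs.length (u * v) := hadd.symm
end

section
/- Let (W,S) be a Coxeter system, I ⊆ S, u, v ∈ W with u ≤ v in Bruhat order, and suppose v is a minimal-length representative of its coset vW_I (i.e., ℓ(vw) = ℓ(v) + ℓ(w) for all w ∈ W_I). Then for any w ∈ W_I, uw ≤ vw in Bruhat order. -/
/-- The standard parabolic subgroup generated by the simple reflections in `I`. -/
def parabolic {B W : Type*} [Group W] {M : CoxeterMatrix B} (cs : CoxeterSystem M W)
    (I : Set B) : Subgroup W :=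
  Subgroup.closure (cs.simple '' I)

/-- The double coset `W_I w W_J`. -/
def doubleCoset {B W : Type*} [Group W] {M : CoxeterMatrix B} (cs : CoxeterSystem M W)
    (I J : Set B) (w : W) : Set W :=
  {x : W | ∃ a ∈ parabolic cs I, ∃ b ∈ parabolic cs J, x = a * w * b}

/-!
Tits' parity action of `W` on `W × ZMod 2` shows that, for any word `ω`, the parity of the
number of occurrences of `t` in the right inversion sequence of `ω` depends only on the
product of `ω`. Hence a right descent `s i` of that product occurs in the sequence, and
deleting the corresponding letter gives the exchange and deletion properties: every word has
a reduced subword with the same product. So `u ≤ v` as soon as `u` is the product of any, not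
necessarily reduced, subword of a reduced word for `v`. If `ℓ(vw) = ℓ(v) + ℓ(w)`, a reduced
word for `v` followed by one for `w` is reduced for `vw`, and a subword for `u` followed by
the word for `w` is a subword for `uw`.
-/

open List

namespace CoxeterSystem

variable {B W : Type*} [Group W] {M : CoxeterMatrix B} (cs : CoxeterSystem M W)

theorem alternatingWord_two_mul_succ (i i' : B) (k : ℕ) :
    alternatingWord i i' (2 * (k + 1)) = i :: i' :: alternatingWord i i' (2 * k) := by
  rw [show 2 * (k + 1) = 2 * k + 1 + 1 by ring, alternatingWord_succ', alternatingWord_succ']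
  simp [parity_simps]

theorem wordProd_alternatingWord_two_mul (i i' : B) (k : ℕ) :
    cs.wordProd (alternatingWord i i' (2 * k)) = (cs.simple i * cs.simple i') ^ k := by
  simp [prod_alternatingWord_eq_mul_pow]

theorem rightInvSeq_alternatingWord_two_mul (i i' : B) (k : ℕ) :
    cs.rightInvSeq (alternatingWord i i' (2 * k)) =
      ((range (2 * k)).map fun c => (cs.simple i' * cs.simple i) ^ c * cs.simple i').reverse := by
  induction k with
  | zero => simp [alternatingWord]
  | succ k ih =>
    have hpow := cs.wordProd_alternatingWord_two_mul i i' k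
    set r := cs.simple i' * cs.simple i
    have hinv : ((cs.simple i * cs.simple i') ^ k)⁻¹ = r ^ k := by
      rw [← inv_pow, mul_inv_rev, inv_simple, inv_simple]
    have hswap : cs.simple i' * (cs.simple i * cs.simple i') ^ k = r ^ k * cs.simple i' :=
      (mul_pow_mul _ _ k).symm
    have hodd : (cs.simple i' * (cs.simple i * cs.simple i') ^ k)⁻¹ * cs.simple i *
        (cs.simple i' * (cs.simple i * cs.simple i') ^ k) = r ^ (2 * k + 1) * cs.simple i' := by
      rw [mul_inv_rev, inv_simple, hinv, hswap, show 2 * k + 1 = k + 1 + k by ring, pow_add,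
        pow_succ]
      simp only [r, mul_assoc]
    have heven : ((cs.simple i * cs.simple i') ^ k)⁻¹ * cs.simple i' *
        (cs.simple i * cs.simple i') ^ k = r ^ (2 * k) * cs.simple i' := by
      rw [hinv, mul_assoc, hswap, two_mul, pow_add, mul_assoc]
    rw [alternatingWord_two_mul_succ, rightInvSeq, rightInvSeq, ih, wordProd_cons, hpow, hodd,
      heven, show 2 * (k + 1) = 2 * k + 1 + 1 by ring, range_succ, range_succ]
    simp

section ParityRep

variable [DecidableEq W]

/-- Tits' action of `s i` on pairs `(t, ε)` of a reflection and a parity, with `t` allowed to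
range over all of `W`. -/
def parityStep (i : B) : Function.End (W × ZMod 2) :=
  fun p => (cs.simple i * p.1 * cs.simple i, p.2 + if p.1 = cs.simple i then 1 else 0)

theorem prod_map_parityStep_apply (ω : List B) (t : W) (ε : ZMod 2) :
    (ω.map cs.parityStep).prod (t, ε) =
      (cs.wordProd ω * t * (cs.wordProd ω)⁻¹, ε + (cs.rightInvSeq ω).count t) := by
  induction ω with
  | nil =>
    simp only [map_nil, prod_nil, wordProd_nil, one_mul, inv_one, mul_one, rightInvSeq_nil,
      count_nil, Nat.cast_zero, add_zero]
    rfl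
  | cons i ω ih =>
    show cs.parityStep i ((ω.map cs.parityStep).prod (t, ε)) = _
    have hcond : cs.wordProd ω * t * (cs.wordProd ω)⁻¹ = cs.simple i ↔
        (cs.wordProd ω)⁻¹ * cs.simple i * cs.wordProd ω = t := by
      constructor <;> intro h <;> rw [← h] <;> group
    simp only [ih, parityStep, rightInvSeq, count_cons, wordProd_cons, hcond, beq_iff_eq,
      Nat.cast_add, Nat.cast_ite, Nat.cast_one, Nat.cast_zero, mul_inv_rev, inv_simple]
    refine Prod.ext (by simp only; group) (by simp only; split_ifs <;> ring)

theorem prod_map_parityStep_alternatingWord (i i' : B) (k : ℕ) :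
    ((alternatingWord i i' (2 * k)).map cs.parityStep).prod =
      (cs.parityStep i * cs.parityStep i') ^ k := by
  induction k with
  | zero => simp [alternatingWord]
  | succ k ih =>
    rw [alternatingWord_two_mul_succ, map_cons, map_cons, prod_cons, prod_cons, ih, pow_succ',
      mul_assoc]

theorem isLiftable_parityStep : M.IsLiftable cs.parityStep := by
  intro i i'
  -- The right inversion sequence of the word `i i' ⋯ i i'` of length `2 * M i i'` runs through
  -- `(s i' * s i) ^ c * s i'` for `c < 2 * M i i'`, which is `M i i'`-periodic in `c`.
  funext ⟨t, ε⟩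
  have hperiod : (fun c => (cs.simple i' * cs.simple i) ^ c * cs.simple i') ∘ (M i i' + ·) =
      fun c => (cs.simple i' * cs.simple i) ^ c * cs.simple i' := by
    funext c
    simp [pow_add, cs.simple_mul_simple_pow']
  rw [← prod_map_parityStep_alternatingWord, prod_map_parityStep_apply,
    rightInvSeq_alternatingWord_two_mul, wordProd_alternatingWord_two_mul, simple_mul_simple_pow,
    two_mul, range_add, count_reverse, map_append, map_map, hperiod, count_append, Nat.cast_add,
    CharTwo.add_self_eq_zero, add_zero, one_mul, inv_one, mul_one]
  rfl

def parityRep : W →* Function.End (W × ZMod 2) :=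
  cs.lift ⟨cs.parityStep, cs.isLiftable_parityStep⟩

theorem parityRep_wordProd (ω : List B) :
    cs.parityRep (cs.wordProd ω) = (ω.map cs.parityStep).prod := by
  rw [wordProd, map_list_prod, map_map]
  congr 2
  funext i
  exact cs.lift_apply_simple _ i

theorem cast_count_rightInvSeq_eq_of_wordProd_eq {ω ω' : List B}
    (h : cs.wordProd ω = cs.wordProd ω') (t : W) :
    ((cs.rightInvSeq ω).count t : ZMod 2) = (cs.rightInvSeq ω').count t := by
  have := congrArg (fun g : Function.End (W × ZMod 2) => (g (t, 0)).2) (congrArg cs.parityRep h)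
  simpa [parityRep_wordProd, prod_map_parityStep_apply] using this

end ParityRep

theorem simple_mem_rightInvSeq_of_isRightDescent {ω : List B} {i : B}
    (h : cs.IsRightDescent (cs.wordProd ω) i) : cs.simple i ∈ cs.rightInvSeq ω := by
  classical
  obtain ⟨χ, hχ, hχω⟩ := cs.exists_isReduced (cs.wordProd ω * cs.simple i)
  have hprod : cs.wordProd (χ.concat i) = cs.wordProd ω := by
    rw [wordProd_concat, ← hχω, mul_assoc, simple_mul_simple_self, mul_one]
  have hχi : cs.simple i ∉ cs.rightInvSeq χ := by
    intro hmem
    have hdesc := (cs.isRightInversion_of_mem_rightInvSeq hχ hmem).2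
    rw [← hχω, mul_assoc, simple_mul_simple_self, mul_one] at hdesc
    exact lt_asymm h hdesc
  have hconj : MulAut.conj (cs.simple i) (cs.simple i) = cs.simple i := by simp
  have hodd : (cs.rightInvSeq (χ.concat i)).count (cs.simple i) = 1 := by
    rw [rightInvSeq_concat, concat_eq_append, count_append]
    nth_rewrite 1 [← hconj]
    rw [count_map_of_injective _ _ (MulAut.conj _).injective, count_eq_zero_of_not_mem hχi]
    simp
  -- `s i` occurs once in the inversion sequence of `χ.concat i`, a word with the same product as
  -- `ω`, hence an odd number of times in that of `ω`.
  have hparity := cs.cast_count_rightInvSeq_eq_of_wordProd_eq hprod (cs.simple i)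
  rw [hodd] at hparity
  by_contra hmem
  rw [count_eq_zero_of_not_mem hmem] at hparity
  exact absurd hparity (by decide)

theorem exists_sublist_wordProd_eq_mul_simple_s7 {ω : List B} {i : B}
    (h : cs.IsRightDescent (cs.wordProd ω) i) :
    ∃ χ : List B, χ.Sublist ω ∧ χ.length + 1 = ω.length ∧
      cs.wordProd χ = cs.wordProd ω * cs.simple i := by
  obtain ⟨j, hj, hji⟩ := mem_iff_getElem.mp (cs.simple_mem_rightInvSeq_of_isRightDescent h)
  refine ⟨ω.eraseIdx j, eraseIdx_sublist ω j, length_eraseIdx_add_one (by simpa using hj), ?_⟩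
  rw [← cs.wordProd_mul_getD_rightInvSeq ω j, getD_eq_getElem _ _ hj, hji]

theorem exists_isReduced_sublist (ω : List B) :
    ∃ χ : List B, χ.Sublist ω ∧ cs.IsReduced χ ∧ cs.wordProd χ = cs.wordProd ω := by
  induction ω using reverseRecOn with
  | nil => exact ⟨[], Sublist.refl _, by simp [IsReduced], rfl⟩
  | append_singleton ω i ih =>
    obtain ⟨χ, hχω, hχ, hprod⟩ := ih
    have hprod' : cs.wordProd (ω ++ [i]) = cs.wordProd χ * cs.simple i := by
      rw [wordProd_append, wordProd_singleton, hprod]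
    rcases cs.length_mul_simple (cs.wordProd χ) i with hup | hdown
    · refine ⟨χ ++ [i], hχω.append (Sublist.refl [i]), ?_,
        by rw [wordProd_append, wordProd_singleton, hprod']⟩
      rw [IsReduced, wordProd_append, wordProd_singleton, hup, hχ.eq, length_append,
        length_singleton]
    · obtain ⟨χ', hχ'χ, hlen, hprod''⟩ :=
        cs.exists_sublist_wordProd_eq_mul_simple_s7 (ω := χ) (i := i) (by rw [IsRightDescent]; omega)
      refine ⟨χ', (hχ'χ.trans hχω).trans (sublist_append_left ω [i]), ?_,
        by rw [hprod'', hprod']⟩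
      rw [IsReduced, hprod'']
      have hχlen := hχ.eq
      omega

end CoxeterSystem

open CoxeterSystem

theorem bruhatLE_of_sublist {B W : Type*} [Group W] {M : CoxeterMatrix B}
    (cs : CoxeterSystem M W) {ω ω' : List B} (hω : cs.IsReduced ω) (hω'ω : ω'.Sublist ω) :
    bruhatLE cs (cs.wordProd ω') (cs.wordProd ω) := by
  obtain ⟨χ, hχω', hχ, hprod⟩ := cs.exists_isReduced_sublist ω'
  exact ⟨ω, hω, rfl, χ, hχω'.trans hω'ω, hχ, hprod⟩

theorem bruhatLE.mul_right {B W : Type*} [Group W] {M : CoxeterMatrix B}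
    {cs : CoxeterSystem M W} {u v w : W} (huv : bruhatLE cs u v)
    (hvw : cs.length (v * w) = cs.length v + cs.length w) :
    bruhatLE cs (u * w) (v * w) := by
  obtain ⟨ω, hω, rfl, ω', hω'ω, -, rfl⟩ := huv
  obtain ⟨η, hη, rfl⟩ := cs.exists_isReduced w
  have hωη : cs.IsReduced (ω ++ η) := by
    rw [CoxeterSystem.IsReduced, wordProd_append, hvw, hω.eq, hη.eq, length_append]
  simpa only [wordProd_append] using bruhatLE_of_sublist cs hωη (hω'ω.append (Sublist.refl η))

/-- If `u ≤ v` and `v` is shortest in `vW_I`, then `uw ≤ vw` for every `w ∈ W_I`. -/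
theorem stmt7 {B W : Type*} [Group W] {M : CoxeterMatrix B} (cs : CoxeterSystem M W)
    (I : Set B) (u v : W) (huv : bruhatLE cs u v)
    (hv : ∀ w ∈ parabolic cs I, cs.length (v * w) = cs.length v + cs.length w) :
    ∀ w ∈ parabolic cs I, bruhatLE cs (u * w) (v * w) :=
  fun w hw => huv.mul_right (hv w hw)
end
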